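/- Let G be a game with no cycle of total weight zero, let F be a set of vertices containing N = N_G such that the supΣ^N-value is finite on F, let H be the subgame obtained by removing F from G (assumed to be a subgame), let φ_H be a reducing potential for H, and assume H^+ = ZP_{φ_H} is empty and H^- = ZN_{φ_H} is nonempty. Let vv' be an edge from H^- ∩ V_Max to F maximising w(vv') + supΣ^N-value(v') − φ_H(v). Then supΣ^N-value(v) = supΣ^N-value(v') + w(vv'). -/

import Mathlib

/-!
Basic definitions for mean-payoff games: games, infinite paths, positional
strategies, the valuations MP, supΣ^X and infΣ^X, values of vertices,
zones N, P, ZN, ZP (also relative to a sub-arena), reduced games,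
potentials and potential reductions, traps.
-/

/-- A game: a sinkless directed graph with integer weights, whose vertices are
partitioned into Min-vertices (`IsMin`) and Max-vertices (`¬ IsMin`). -/
structure MPGame (V : Type*) where
  E : V → V → Prop
  w : V → V → ℤ
  IsMin : V → Prop
  sinkless : ∀ v, ∃ v', E v v'

namespace MPGame

variable {V : Type*}

/-- An infinite path in a game. -/
structure Path (G : MPGame V) where
  vert : ℕ → V
  adj : ∀ i, G.E (vert i) (vert (i + 1))

/-- The sum of the weights of the first `k` edges of a path. -/
def Path.wsum {G : MPGame V} (π : G.Path) (k : ℕ) : ℤ :=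
  ∑ i ∈ Finset.range k, G.w (π.vert i) (π.vert (i + 1))

/-- The tail of a path (drop the first vertex). -/
def Path.tail {G : MPGame V} (π : G.Path) : G.Path :=
  ⟨fun i => π.vert (i + 1), fun i => π.adj (i + 1)⟩

/-- A positional strategy `σ : V → V` is legal if it always follows an edge. -/
def Legal (G : MPGame V) (σ : V → V) : Prop := ∀ v, G.E v (σ v)

/-- Consistency of a path with a positional Min-strategy. -/
def Path.ConsMin {G : MPGame V} (π : G.Path) (σ : V → V) : Prop :=
  ∀ i, G.IsMin (π.vert i) → π.vert (i + 1) = σ (π.vert i)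

/-- Consistency of a path with a positional Max-strategy. -/
def Path.ConsMax {G : MPGame V} (π : G.Path) (τ : V → V) : Prop :=
  ∀ i, ¬ G.IsMin (π.vert i) → π.vert (i + 1) = τ (π.vert i)

/-- The mean-payoff valuation `MP(π) = limsup_k (1/k) ∑_{i<k} w_i`. -/
noncomputable def MP {G : MPGame V} (π : G.Path) : EReal :=
  Filter.limsup (fun k => (((π.wsum k : ℝ) / (k : ℝ)) : EReal)) Filter.atTop

/-- `supΣ^X(π) = sup_{k ≤ n_X} ∑_{i<k} w_i`, where `n_X` is the first hitting
time of `X` (all `k` if `X` is never hit). -/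
noncomputable def supSigma {G : MPGame V} (X : Set V) (π : G.Path) : EReal :=
  ⨆ k : {k : ℕ // ∀ i < k, π.vert i ∉ X}, ((π.wsum k.1 : ℝ) : EReal)

/-- `infΣ^X(π) = inf_{k ≤ n_X} ∑_{i<k} w_i`. -/
noncomputable def infSigma {G : MPGame V} (X : Set V) (π : G.Path) : EReal :=
  ⨅ k : {k : ℕ // ∀ i < k, π.vert i ∉ X}, ((π.wsum k.1 : ℝ) : EReal)

/-- `inf_σ sup_{π ⊨ σ, π from v} val(π)`, over legal positional Min-strategies. -/
noncomputable def minVal (G : MPGame V) (val : G.Path → EReal) (v : V) : EReal :=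
  ⨅ σ : {σ : V → V // G.Legal σ},
    ⨆ π : {π : G.Path // π.vert 0 = v ∧ π.ConsMin σ.1}, val π.1

/-- `sup_τ inf_{π ⊨ τ, π from v} val(π)`, over legal positional Max-strategies. -/
noncomputable def maxVal (G : MPGame V) (val : G.Path → EReal) (v : V) : EReal :=
  ⨆ τ : {τ : V → V // G.Legal τ},
    ⨅ π : {π : G.Path // π.vert 0 = v ∧ π.ConsMax τ.1}, val π.1

/-- The MP-value of a vertex. -/
noncomputable def MPval (G : MPGame V) (v : V) : EReal := G.minVal MP v

/-- The `supΣ^X`-value of a vertex. -/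
noncomputable def supSigmaVal (G : MPGame V) (X : Set V) (v : V) : EReal :=
  G.minVal (supSigma X) v

/-- The `infΣ^X`-value of a vertex. -/
noncomputable def infSigmaVal (G : MPGame V) (X : Set V) (v : V) : EReal :=
  G.minVal (infSigma X) v

/-- `G` has no cycle of total weight zero: no path repeats a vertex with the
same partial sum of weights. -/
def NoZeroCycle (G : MPGame V) : Prop :=
  ∀ (π : G.Path) (i j : ℕ), i < j → π.vert i = π.vert j → π.wsum i ≠ π.wsum j

/-- The zone `N` of the subgame of `G` induced on `D`: vertices whose
immediately optimal edges (within `D`) have weight `< 0`. -/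
def NsetOn (G : MPGame V) (D : Set V) : Set V :=
  {v | v ∈ D ∧ ((G.IsMin v ∧ ∃ v' ∈ D, G.E v v' ∧ G.w v v' < 0) ∨
      (¬ G.IsMin v ∧ ∀ v' ∈ D, G.E v v' → G.w v v' < 0))}

/-- The zone `P` of the subgame of `G` induced on `D`. -/
def PsetOn (G : MPGame V) (D : Set V) : Set V :=
  {v | v ∈ D ∧ ((¬ G.IsMin v ∧ ∃ v' ∈ D, G.E v v' ∧ 0 < G.w v v') ∨
      (G.IsMin v ∧ ∀ v' ∈ D, G.E v v' → 0 < G.w v v'))}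

/-- The zone `N` of `G`. -/
def Nset (G : MPGame V) : Set V := G.NsetOn Set.univ

/-- The zone `P` of `G`. -/
def Pset (G : MPGame V) : Set V := G.PsetOn Set.univ

/-- The zone `ZN` of the subgame of `G` induced on `D`: vertices from which
Min can force that an edge of weight `< 0` is visited before any edge of
weight `> 0` (staying within `D`). -/
inductive ZNr (G : MPGame V) (D : Set V) : V → Prop
  | minNeg (v v' : V) : v ∈ D → G.IsMin v → v' ∈ D → G.E v v' → G.w v v' < 0 →
      ZNr G D v
  | minZero (v v' : V) : v ∈ D → G.IsMin v → v' ∈ D → G.E v v' → G.w v v' = 0 →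
      ZNr G D v' → ZNr G D v
  | max (v : V) : v ∈ D → ¬ G.IsMin v →
      (∀ v' ∈ D, G.E v v' → G.w v v' ≤ 0) →
      (∀ v', v' ∈ D → G.E v v' → G.w v v' = 0 → ZNr G D v') →
      ZNr G D v

/-- The zone `ZP` of the subgame of `G` induced on `D`. -/
inductive ZPr (G : MPGame V) (D : Set V) : V → Prop
  | maxPos (v v' : V) : v ∈ D → ¬ G.IsMin v → v' ∈ D → G.E v v' → 0 < G.w v v' →
      ZPr G D v
  | maxZero (v v' : V) : v ∈ D → ¬ G.IsMin v → v' ∈ D → G.E v v' → G.w v v' = 0 →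
      ZPr G D v' → ZPr G D v
  | min (v : V) : v ∈ D → G.IsMin v →
      (∀ v' ∈ D, G.E v v' → 0 ≤ G.w v v') →
      (∀ v', v' ∈ D → G.E v v' → G.w v v' = 0 → ZPr G D v') →
      ZPr G D v

/-- The zone `ZN` of `G`. -/
def ZN (G : MPGame V) : V → Prop := G.ZNr Set.univ

/-- The zone `ZP` of `G`. -/
def ZP (G : MPGame V) : V → Prop := G.ZPr Set.univ

/-- The subgame of `G` induced on `D` is reduced: from every vertex of `ZN`,
Min can force that the first edge visited has weight `≤ 0` and leads into
`ZN`, and symmetrically for `ZP` and Max. -/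
def ReducedOn (G : MPGame V) (D : Set V) : Prop :=
  (∀ v, G.ZNr D v →
     (G.IsMin v → ∃ v' ∈ D, G.E v v' ∧ G.w v v' ≤ 0 ∧ G.ZNr D v') ∧
     (¬ G.IsMin v → ∀ v' ∈ D, G.E v v' → G.w v v' ≤ 0 ∧ G.ZNr D v')) ∧
  (∀ v, G.ZPr D v →
     (¬ G.IsMin v → ∃ v' ∈ D, G.E v v' ∧ 0 ≤ G.w v v' ∧ G.ZPr D v') ∧
     (G.IsMin v → ∀ v' ∈ D, G.E v v' → 0 ≤ G.w v v' ∧ G.ZPr D v'))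

/-- `G` is reduced. -/
def Reduced (G : MPGame V) : Prop := G.ReducedOn Set.univ

/-- The subgame of `G` induced on `D` is positively reduced: `ZN = ∅`. -/
def PosReducedOn (G : MPGame V) (D : Set V) : Prop := ∀ v, ¬ G.ZNr D v

/-- `A` is a trap for Min: a sinkless subgraph from which Min cannot escape. -/
def TrapForMin (G : MPGame V) (A : Set V) : Prop :=
  (∀ v ∈ A, ∃ v' ∈ A, G.E v v') ∧
  ∀ v ∈ A, G.IsMin v → ∀ v', G.E v v' → v' ∈ A

/-- `A` is a trap for Max: a sinkless subgraph from which Max cannot escape. -/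
def TrapForMax (G : MPGame V) (A : Set V) : Prop :=
  (∀ v ∈ A, ∃ v' ∈ A, G.E v v') ∧
  ∀ v ∈ A, ¬ G.IsMin v → ∀ v', G.E v v' → v' ∈ A

/-- The potential reduction of `G` by the potential `φ`. -/
def pot (G : MPGame V) (φ : V → ℤ) : MPGame V where
  E := G.E
  w := fun v v' => G.w v v' + φ v' - φ v
  IsMin := G.IsMin
  sinkless := G.sinkless

end MPGame

/-!
Lower bound: `v` is a Max-vertex outside `N`, so `supΣ^N(v) ≥ w(vv') + supΣ^N(v')`.

Upper bound: put `c = w(vv') + supΣ^N(v') − φ_H(v)`. The function equal to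
`min(supΣ^N, c + φ_H)` on `H⁻` and to `supΣ^N` elsewhere is nonnegative and satisfies
the Bellman inequalities of the `supΣ^N` game, so it dominates the value. Inside `H⁻`
reducedness of `H_{φ_H}` gives Min an edge, and confines Max to edges, of nonpositive
reduced weight staying in `H⁻`, so `c + φ_H` does not increase along them; the edges
from `H⁻ ∩ V_Max` into `F` are controlled by the maximality of `vv'`. Finally `c + φ_H ≥ 0` on `H⁻`:
otherwise, since no vertex of `H` lies in `N`, one could stay forever in
`{c + φ_H < 0}` along edges of nonnegative weight and nonpositive reduced weight, and
the first repeated vertex would close a cycle of weight zero.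
-/

lemma EReal.coe_add_iSup_le {ι : Sort*} {a : ℝ} {f : ι → EReal} {T : EReal}
    (h : ∀ i, a + f i ≤ T) : a + ⨆ i, f i ≤ T := by
  have hsub : ∀ b, b ≤ T - a ↔ b + a ≤ T := fun _ =>
    EReal.le_sub_iff_add_le (.inl (EReal.coe_ne_bot a)) (.inl (EReal.coe_ne_top a))
  rw [add_comm, ← hsub]
  exact iSup_le fun i => (hsub _).2 (by rw [add_comm]; exact h i)

namespace MPGame

variable {V : Type*} {G : MPGame V}

def Path.cons (x : V) (π : G.Path) (h : G.E x (π.vert 0)) : G.Path where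
  vert := fun | 0 => x | n + 1 => π.vert n
  adj := fun | 0 => h | n + 1 => π.adj n

lemma Path.wsum_succ (π : G.Path) (k : ℕ) :
    π.wsum (k + 1) = π.wsum k + G.w (π.vert k) (π.vert (k + 1)) :=
  Finset.sum_range_succ _ _

lemma Path.wsum_cons (x : V) (π : G.Path) (h : G.E x (π.vert 0)) (k : ℕ) :
    (π.cons x h).wsum (k + 1) = G.w x (π.vert 0) + π.wsum k := by
  rw [Path.wsum, Finset.sum_range_succ', add_comm]
  rfl

lemma Path.exists_of_forall_exists {S : Set V} {R : V → V → Prop}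
    (hS : ∀ x ∈ S, ∃ y ∈ S, G.E x y ∧ R x y) {x₀ : V} (hx₀ : x₀ ∈ S) :
    ∃ π : G.Path, π.vert 0 = x₀ ∧ ∀ i, R (π.vert i) (π.vert (i + 1)) := by
  choose s hsS hsE hsR using hS
  let t : S → S := fun x => ⟨s x x.2, hsS x x.2⟩
  refine ⟨⟨fun n => (t^[n] ⟨x₀, hx₀⟩ : V), fun n => ?_⟩, rfl, fun n => ?_⟩
  · simp only [Function.iterate_succ_apply']
    exact hsE _ _
  · simp only [Function.iterate_succ_apply']
    exact hsR _ _

lemma NoZeroCycle.false_of_nonneg_of_pot_nonpos [Finite V] (hz : G.NoZeroCycle) (φ : V → ℤ)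
    (π : G.Path)
    (hw : ∀ i, 0 ≤ G.w (π.vert i) (π.vert (i + 1)))
    (hφ : ∀ i, (G.pot φ).w (π.vert i) (π.vert (i + 1)) ≤ 0) : False := by
  have hmono : Monotone π.wsum := monotone_nat_of_le_succ fun i => by
    rw [π.wsum_succ]
    linarith [hw i]
  have hanti : Antitone fun i => π.wsum i + φ (π.vert i) :=
    antitone_nat_of_succ_le fun i => by
      have := hφ i
      simp only [pot] at this
      rw [π.wsum_succ]
      linarith
  obtain ⟨i, j, hij, hvert⟩ :=
    Set.finite_univ.exists_lt_map_eq_of_forall_mem (f := π.vert) fun _ => Set.mem_univ _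
  have := hanti hij.le
  simp only [hvert] at this
  exact hz π i j hij hvert (le_antisymm (hmono hij.le) (by linarith))

section Values

variable {X : Set V}

noncomputable def supSigmaStratVal (G : MPGame V) (X : Set V) (σ : V → V) (u : V) : EReal :=
  ⨆ π : {π : G.Path // π.vert 0 = u ∧ π.ConsMin σ}, supSigma X π.1

lemma supSigmaVal_le_supSigmaStratVal {σ : V → V} (hσ : G.Legal σ) (u : V) :
    G.supSigmaVal X u ≤ G.supSigmaStratVal X σ u :=
  iInf_le (fun σ : {σ : V → V // G.Legal σ} => G.supSigmaStratVal X σ.1 u) ⟨σ, hσ⟩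

lemma exists_supSigmaStratVal_eq [Finite V] (u : V) :
    ∃ σ, G.Legal σ ∧ G.supSigmaStratVal X σ u = G.supSigmaVal X u := by
  have : Nonempty {σ : V → V // G.Legal σ} := by
    choose σ hσ using G.sinkless
    exact ⟨σ, hσ⟩
  obtain ⟨σ, hσ⟩ :=
    Finite.exists_min fun σ : {σ : V → V // G.Legal σ} => G.supSigmaStratVal X σ.1 u
  exact ⟨σ.1, σ.2, le_antisymm (le_iInf hσ) (supSigmaVal_le_supSigmaStratVal σ.2 u)⟩

lemma supSigma_nonneg (π : G.Path) : 0 ≤ supSigma X π :=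
  le_iSup_of_le (ι := {k : ℕ // ∀ i < k, π.vert i ∉ X})
    ⟨0, fun _ h => absurd h (Nat.not_lt_zero _)⟩
    (by simp [Path.wsum])

lemma supSigmaVal_nonneg (u : V) : 0 ≤ G.supSigmaVal X u := by
  refine le_iInf fun σ => ?_
  obtain ⟨π, hπ₀, hπ⟩ := Path.exists_of_forall_exists (G := G) (S := Set.univ)
    (R := fun x y => G.IsMin x → y = σ.1 x)
    (fun x _ => ⟨σ.1 x, trivial, σ.2 x, fun _ => rfl⟩) (Set.mem_univ u)
  exact (supSigma_nonneg π).trans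
    (le_iSup (fun π : {π : G.Path // π.vert 0 = u ∧ π.ConsMin σ.1} => supSigma X π.1)
      ⟨π, hπ₀, hπ⟩)

lemma coe_w_add_supSigma_le_cons {x : V} (hx : x ∉ X) (π : G.Path) (h : G.E x (π.vert 0)) :
    ((G.w x (π.vert 0) : ℝ) : EReal) + supSigma X π ≤ supSigma X (π.cons x h) := by
  refine EReal.coe_add_iSup_le fun ⟨k, hk⟩ => ?_
  have hk' : ∀ i < k + 1, (π.cons x h).vert i ∉ X
    | 0, _ => hx
    | i + 1, hi => hk i (by omega)
  refine le_iSup_of_le (ι := {k : ℕ // ∀ i < k, (π.cons x h).vert i ∉ X})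
    ⟨k + 1, hk'⟩ ?_
  rw [Path.wsum_cons]
  push_cast
  rfl

lemma coe_w_add_supSigmaStratVal_le {σ : V → V} {x y : V} (hx : x ∉ X) (hE : G.E x y)
    (hσ : G.IsMin x → σ x = y) :
    ((G.w x y : ℝ) : EReal) + G.supSigmaStratVal X σ y ≤ G.supSigmaStratVal X σ x := by
  refine EReal.coe_add_iSup_le fun ⟨π, hπ₀, hπ⟩ => ?_
  subst hπ₀
  have hcons : (π.cons x hE).ConsMin σ
    | 0, hmin => (hσ hmin).symm
    | i + 1, hmin => hπ i hmin
  exact (coe_w_add_supSigma_le_cons hx π hE).trans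
    (le_iSup (fun π : {π : G.Path // π.vert 0 = x ∧ π.ConsMin σ} => supSigma X π.1)
      ⟨π.cons x hE, rfl, hcons⟩)

/-- `k` dominates, outside `X`, one step of the Bellman operator of the `supΣ^X` game
applied to `h`. -/
def BellmanLE (G : MPGame V) (X : Set V) (h k : V → EReal) : Prop :=
  ∀ x ∉ X, (G.IsMin x → ∃ y, G.E x y ∧ ((G.w x y : ℝ) : EReal) + h y ≤ k x) ∧
    (¬ G.IsMin x → ∀ y, G.E x y → ((G.w x y : ℝ) : EReal) + h y ≤ k x)

lemma BellmanLE.mono_left {h h' k : V → EReal} (H : G.BellmanLE X h k) (hh : h' ≤ h) :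
    G.BellmanLE X h' k := fun x hx =>
  ⟨fun hmin => (H x hx).1 hmin |>.imp fun y ⟨hE, hy⟩ =>
      ⟨hE, (add_le_add_right (hh y) _).trans hy⟩,
    fun hmax y hE => (add_le_add_right (hh y) _).trans ((H x hx).2 hmax y hE)⟩

lemma BellmanLE.inf_right {h k₁ k₂ : V → EReal} (H₁ : G.BellmanLE X h k₁)
    (H₂ : G.BellmanLE X h k₂) : G.BellmanLE X h (k₁ ⊓ k₂) := by
  intro x hx
  refine ⟨fun hmin => ?_, fun hmax y hE =>
    le_inf ((H₁ x hx).2 hmax y hE) ((H₂ x hx).2 hmax y hE)⟩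
  rcases le_total (k₁ x) (k₂ x) with hle | hle
  · simpa only [Pi.inf_apply, inf_eq_left.2 hle] using (H₁ x hx).1 hmin
  · simpa only [Pi.inf_apply, inf_eq_right.2 hle] using (H₂ x hx).1 hmin

lemma bellmanLE_supSigmaVal [Finite V] :
    G.BellmanLE X (G.supSigmaVal X) (G.supSigmaVal X) := by
  intro x hx
  refine ⟨fun _ => ?_, fun hmax y hE => le_iInf fun σ => ?_⟩
  · obtain ⟨σ, hσ, hopt⟩ := exists_supSigmaStratVal_eq (G := G) (X := X) x
    refine ⟨σ x, hσ x, ?_⟩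
    calc ((G.w x (σ x) : ℝ) : EReal) + G.supSigmaVal X (σ x)
        ≤ (G.w x (σ x) : ℝ) + G.supSigmaStratVal X σ (σ x) := by
          gcongr
          exact supSigmaVal_le_supSigmaStratVal hσ _
      _ ≤ G.supSigmaStratVal X σ x := coe_w_add_supSigmaStratVal_le hx (hσ x) fun _ => rfl
      _ = G.supSigmaVal X x := hopt
  · calc ((G.w x y : ℝ) : EReal) + G.supSigmaVal X y
        ≤ (G.w x y : ℝ) + G.supSigmaStratVal X σ.1 y := by
          gcongr
          exact supSigmaVal_le_supSigmaStratVal σ.2 _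
      _ ≤ G.supSigmaStratVal X σ.1 x :=
          coe_w_add_supSigmaStratVal_le hx hE fun hmin => absurd hmin hmax

lemma Path.supSigma_le {h : V → EReal} (h0 : 0 ≤ h) (π : G.Path)
    (hstep : ∀ i, π.vert i ∉ X →
      ((G.w (π.vert i) (π.vert (i + 1)) : ℝ) : EReal) + h (π.vert (i + 1)) ≤ h (π.vert i)) :
    supSigma X π ≤ h (π.vert 0) := by
  have htel : ∀ k, (∀ i < k, π.vert i ∉ X) →
      ((π.wsum k : ℝ) : EReal) + h (π.vert k) ≤ h (π.vert 0) := by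
    intro k
    induction k with
    | zero => simp [Path.wsum]
    | succ k ih =>
      intro hk
      calc ((π.wsum (k + 1) : ℝ) : EReal) + h (π.vert (k + 1))
          = (π.wsum k : ℝ) +
              ((G.w (π.vert k) (π.vert (k + 1)) : ℝ) + h (π.vert (k + 1))) := by
            rw [π.wsum_succ]
            push_cast
            rw [add_assoc]
        _ ≤ (π.wsum k : ℝ) + h (π.vert k) := by
            gcongr
            exact hstep k (hk k k.lt_succ_self)
        _ ≤ h (π.vert 0) := ih fun i hi => hk i (hi.trans k.lt_succ_self)
  exact iSup_le fun ⟨k, hk⟩ => (le_add_of_nonneg_right (h0 _)).trans (htel k hk)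

lemma supSigmaVal_le_of_bellmanLE {h : V → EReal} (H : G.BellmanLE X h h) (h0 : 0 ≤ h)
    (u : V) : G.supSigmaVal X u ≤ h u := by
  have : ∀ x, ∃ y, G.E x y ∧
      (x ∉ X → G.IsMin x → ((G.w x y : ℝ) : EReal) + h y ≤ h x) := by
    intro x
    by_cases hcase : x ∉ X ∧ G.IsMin x
    · obtain ⟨y, hE, hy⟩ := (H x hcase.1).1 hcase.2
      exact ⟨y, hE, fun _ _ => hy⟩
    · obtain ⟨y, hE⟩ := G.sinkless x
      exact ⟨y, hE, fun hx hmin => absurd ⟨hx, hmin⟩ hcase⟩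
  choose σ hσE hσ using this
  refine (supSigmaVal_le_supSigmaStratVal hσE u).trans (iSup_le ?_)
  rintro ⟨π, rfl, hπ⟩
  refine π.supSigma_le h0 fun i hi => ?_
  by_cases hmin : G.IsMin (π.vert i)
  · rw [hπ i hmin]
    exact hσ _ hi hmin
  · exact (H _ hi).2 hmin _ (π.adj i)

end Values

section Zones

variable {F : Set V} {φ : V → ℤ}

lemma ZNr.mem {D : Set V} {x : V} (h : G.ZNr D x) : x ∈ D := by
  cases h <;> assumption

lemma w_nonneg_of_notMem_Nset {x y : V} (hx : x ∉ G.Nset) (hmin : G.IsMin x)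
    (hE : G.E x y) : 0 ≤ G.w x y := by
  by_contra! hneg
  exact hx ⟨trivial, .inl ⟨hmin, y, trivial, hE, hneg⟩⟩

lemma exists_w_nonneg_of_notMem_Nset {x : V} (hx : x ∉ G.Nset) (hmax : ¬ G.IsMin x) :
    ∃ y, G.E x y ∧ 0 ≤ G.w x y := by
  by_contra! hneg
  exact hx ⟨trivial, .inr ⟨hmax, fun y _ hE => hneg y hE⟩⟩

open Classical in
noncomputable def zoneCap (G : MPGame V) (D : Set V) (φ : V → ℤ) (c : ℤ) : V → EReal :=
  fun x => if (G.pot φ).ZNr D x then (((c + φ x : ℤ) : ℝ) : EReal) else ⊤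

lemma zoneCap_of_zNr {D : Set V} {c : ℤ} {x : V} (hx : (G.pot φ).ZNr D x) :
    G.zoneCap D φ c x = (((c + φ x : ℤ) : ℝ) : EReal) := by
  simp [zoneCap, hx]

lemma zoneCap_of_not_zNr {D : Set V} {c : ℤ} {x : V} (hx : ¬ (G.pot φ).ZNr D x) :
    G.zoneCap D φ c x = ⊤ := by
  simp [zoneCap, hx]

lemma zoneCap_nonneg [Finite V] {c : ℤ} (hz : G.NoZeroCycle) (hNF : G.Nset ⊆ F)
    (hred : (G.pot φ).ReducedOn Fᶜ)
    (hexit : ∀ u u', (G.pot φ).ZNr Fᶜ u → ¬ G.IsMin u → G.E u u' → u' ∈ F →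
      G.w u u' ≤ c + φ u) :
    0 ≤ G.zoneCap Fᶜ φ c := by
  suffices ∀ x, (G.pot φ).ZNr Fᶜ x → 0 ≤ c + φ x by
    intro x
    by_cases hx : (G.pot φ).ZNr Fᶜ x
    · rw [Pi.zero_apply, zoneCap_of_zNr hx]
      exact EReal.coe_nonneg.2 (Int.cast_nonneg (this x hx))
    · exact (zoneCap_of_not_zNr hx).symm ▸ le_top
  by_contra! ⟨x₀, hx₀, hneg⟩
  let S := {x | (G.pot φ).ZNr Fᶜ x ∧ c + φ x < 0}
  have hstep : ∀ x ∈ S, ∃ y ∈ S, G.E x y ∧ 0 ≤ G.w x y ∧ (G.pot φ).w x y ≤ 0 := by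
    rintro x ⟨hx, hcx⟩
    have hxN : x ∉ G.Nset := fun h => hx.mem (hNF h)
    obtain ⟨y, hE, hw, hpw, hy⟩ : ∃ y, G.E x y ∧ 0 ≤ G.w x y ∧ (G.pot φ).w x y ≤ 0 ∧
        (G.pot φ).ZNr Fᶜ y := by
      by_cases hmin : G.IsMin x
      · obtain ⟨y, -, hE, hpw, hy⟩ := (hred.1 x hx).1 hmin
        exact ⟨y, hE, w_nonneg_of_notMem_Nset hxN hmin hE, hpw, hy⟩
      · obtain ⟨y, hE, hw⟩ := exists_w_nonneg_of_notMem_Nset hxN hmin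
        have hyF : y ∉ F := fun hyF => by linarith [hexit x y hx hmin hE hyF]
        exact ⟨y, hE, hw, (hred.1 x hx).2 hmin y hyF hE⟩
    refine ⟨y, ⟨hy, ?_⟩, hE, hw, hpw⟩
    simp only [pot] at hpw
    omega
  obtain ⟨π, -, hπ⟩ := Path.exists_of_forall_exists hstep ⟨hx₀, hneg⟩
  exact hz.false_of_nonneg_of_pot_nonpos φ π (fun i => (hπ i).1) (fun i => (hπ i).2)

lemma bellmanLE_zoneCap {X : Set V} {f : V → EReal} {g : V → ℤ} {c : ℤ}
    (hfg : ∀ u ∈ F, f u ≤ ((g u : ℝ) : EReal)) (hred : (G.pot φ).ReducedOn Fᶜ)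
    (hmax : ∀ u u', (G.pot φ).ZNr Fᶜ u → ¬ G.IsMin u → G.E u u' → u' ∈ F →
      G.w u u' + g u' - φ u ≤ c) :
    G.BellmanLE X (f ⊓ G.zoneCap Fᶜ φ c) (G.zoneCap Fᶜ φ c) := by
  intro x _
  by_cases hx : (G.pot φ).ZNr Fᶜ x
  swap
  · rw [zoneCap_of_not_zNr hx]
    exact ⟨fun _ => (G.sinkless x).imp fun _ hE => ⟨hE, le_top⟩, fun _ _ _ => le_top⟩
  have hcapx : G.zoneCap Fᶜ φ c x = (((c + φ x : ℤ) : ℝ) : EReal) := zoneCap_of_zNr hx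
  have hreduced : ∀ y, (G.pot φ).ZNr Fᶜ y → (G.pot φ).w x y ≤ 0 →
      ((G.w x y : ℝ) : EReal) + (f ⊓ G.zoneCap Fᶜ φ c) y ≤ G.zoneCap Fᶜ φ c x := by
    intro y hy hpw
    simp only [pot] at hpw
    calc ((G.w x y : ℝ) : EReal) + (f ⊓ G.zoneCap Fᶜ φ c) y
        ≤ (G.w x y : ℝ) + (((c + φ y : ℤ) : ℝ) : EReal) := by
          gcongr
          exact inf_le_right.trans (zoneCap_of_zNr hy).le
      _ ≤ G.zoneCap Fᶜ φ c x := by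
          rw [hcapx, ← EReal.coe_add, ← Int.cast_add]
          exact_mod_cast (by omega)
  refine ⟨fun hmin => ?_, fun hxMax y hE => ?_⟩
  · obtain ⟨y, -, hE, hpw, hy⟩ := (hred.1 x hx).1 hmin
    exact ⟨y, hE, hreduced y hy hpw⟩
  by_cases hyF : y ∈ F
  · calc ((G.w x y : ℝ) : EReal) + (f ⊓ G.zoneCap Fᶜ φ c) y
        ≤ (G.w x y : ℝ) + ((g y : ℝ) : EReal) := by
          gcongr
          exact inf_le_left.trans (hfg y hyF)
      _ ≤ G.zoneCap Fᶜ φ c x := by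
          rw [hcapx, ← EReal.coe_add, ← Int.cast_add]
          exact_mod_cast (by linarith [hmax x y hx hxMax hE hyF])
  · obtain ⟨hpw, hy⟩ := (hred.1 x hx).2 hxMax y hyF hE
    exact hreduced y hy hpw

end Zones

end MPGame

open MPGame in
theorem statement12_general {V : Type*} [Fintype V] (G : MPGame V)
    (hz : G.NoZeroCycle)
    (F : Set V) (hNF : G.Nset ⊆ F)
    (g : V → ℤ) (hg : ∀ u ∈ F, G.supSigmaVal G.Nset u = ((g u : ℝ) : EReal))
    (φH : V → ℤ) (hred : (G.pot φH).ReducedOn Fᶜ)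
    (v v' : V)
    (hv : (G.pot φH).ZNr Fᶜ v) (hvMax : ¬ G.IsMin v)
    (hvv' : G.E v v') (hv'F : v' ∈ F)
    (hmax : ∀ u u', (G.pot φH).ZNr Fᶜ u → ¬ G.IsMin u → G.E u u' → u' ∈ F →
      G.w u u' + g u' - φH u ≤ G.w v v' + g v' - φH v) :
    G.supSigmaVal G.Nset v = ((g v' + G.w v v' : ℝ) : EReal) := by
  set c := G.w v v' + g v' - φH v
  set val := G.supSigmaVal G.Nset
  set cap := G.zoneCap Fᶜ φH c
  have hg0 : ∀ u ∈ F, 0 ≤ g u := fun u hu => by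
    have : 0 ≤ val u := supSigmaVal_nonneg u
    rw [hg u hu] at this
    exact_mod_cast this
  have hcap : 0 ≤ cap := zoneCap_nonneg hz hNF hred fun u u' hu hmin hE hF => by
    linarith [hmax u u' hu hmin hE hF, hg0 u' hF]
  have hsuper : G.BellmanLE G.Nset (val ⊓ cap) (val ⊓ cap) :=
    (bellmanLE_supSigmaVal.mono_left inf_le_left).inf_right
      (bellmanLE_zoneCap (fun u hu => (hg u hu).le) hred hmax)
  have hup : val v ≤ (((c + φH v : ℤ) : ℝ) : EReal) :=
    (supSigmaVal_le_of_bellmanLE hsuper (le_inf (fun _ => supSigmaVal_nonneg _) hcap) v).trans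
      (inf_le_right.trans (zoneCap_of_zNr hv).le)
  have hlow : ((G.w v v' : ℝ) : EReal) + ((g v' : ℝ) : EReal) ≤ val v := by
    rw [← hg v' hv'F]
    exact (bellmanLE_supSigmaVal v fun h => hv.mem (hNF h)).2 hvMax v' hvv'
  have hc : c + φH v = g v' + G.w v v' := by omega
  rw [hc] at hup
  refine le_antisymm (by exact_mod_cast hup) ?_
  rw [add_comm] at hlow
  exact_mod_cast hlow

open MPGame in
/-- second part of Lemma 3b: with `F ⊇ N` as before,
`H = G ∖ F` a subgame with reducing potential `φ_H`, `H⁺` empty and `H⁻`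
nonempty, if `vv'` is an edge from `H⁻ ∩ V_Max` to `F` maximising
`w(vv') + supΣ^N(v') − φ_H(v)`, then `supΣ^N(v) = supΣ^N(v') + w(vv')`. -/
theorem statement12 {V : Type*} [Fintype V] (G : MPGame V)
    (hz : G.NoZeroCycle)
    (F : Set V) (hNF : G.Nset ⊆ F)
    (g : V → ℤ) (hg : ∀ u ∈ F, G.supSigmaVal G.Nset u = ((g u : ℝ) : EReal))
    (hsub : ∀ u ∈ Fᶜ, ∃ u' ∈ Fᶜ, G.E u u')
    (φH : V → ℤ) (hred : (G.pot φH).ReducedOn Fᶜ)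
    (hplus : ∀ u, ¬ (G.pot φH).ZPr Fᶜ u)
    (hminus : ∃ u, (G.pot φH).ZNr Fᶜ u)
    (v v' : V)
    (hv : (G.pot φH).ZNr Fᶜ v) (hvMax : ¬ G.IsMin v)
    (hvv' : G.E v v') (hv'F : v' ∈ F)
    (hmax : ∀ u u', (G.pot φH).ZNr Fᶜ u → ¬ G.IsMin u → G.E u u' → u' ∈ F →
      G.w u u' + g u' - φH u ≤ G.w v v' + g v' - φH v) :
    G.supSigmaVal G.Nset v = ((g v' + G.w v v' : ℝ) : EReal) :=
  statement12_general G hz F hNF g hg φH hred v v' hv hvMax hvv' hv'F hmax
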